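/- arXiv:1711.04823 — 4 statements merged into one kernel-verified Lean document; each statement's English description precedes it below -/
import Mathlib

section
/- For all natural numbers m and n with m ≥ n, the alternating sum ∑_{k=0}^{n} (-1)^k · C(m+n-k, m) · C(m, k) equals 1. -/
/-! By upper negation, `C(-(r + 1), j) = (-1)^j C(r + j, r)`. Hence, up to the sign `(-1)^n`, the sum
is the Chu–Vandermonde convolution of `C(m, ·)` with `C(-(m + 1), ·)`, which is `C(-1, n) = (-1)^n`. -/

open Finset

theorem Int.ringChoose_neg_natCast_succ (r j : ℕ) :
    Ring.choose (-((r : ℤ) + 1)) j = (-1) ^ j * ((r + j).choose r : ℤ) := by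
  rw [Ring.choose_neg, Int.negOnePow_def, Units.smul_def,
    show (r : ℤ) + 1 + j - 1 = (r + j : ℕ) by push_cast; ring, Ring.choose_natCast,
    Nat.choose_symm_add]
  simp

theorem Int.ringChoose_neg_one (n : ℕ) : Ring.choose (-1 : ℤ) n = (-1) ^ n := by
  simpa using Int.ringChoose_neg_natCast_succ 0 n

theorem sum_range_neg_one_pow_mul_choose_mul_choose (m r n : ℕ) :
    ∑ k ∈ range (n + 1), (-1 : ℤ) ^ k * ((r + (n - k)).choose r : ℤ) * (m.choose k : ℤ) =
      (-1) ^ n * Ring.choose ((m : ℤ) - (r + 1)) n := by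
  rw [sub_eq_add_neg, Ring.add_choose_eq _ (Commute.all _ _),
    Nat.sum_antidiagonal_eq_sum_range_succ (fun i j => Ring.choose (m : ℤ) i * Ring.choose _ j),
    mul_sum]
  refine sum_congr rfl fun k hk => ?_
  have hkn : k ≤ n := Nat.lt_succ_iff.mp (mem_range.mp hk)
  have hsq : ((-1 : ℤ) ^ (n - k)) * (-1) ^ (n - k) = 1 := by rw [← mul_pow]; norm_num
  rw [Ring.choose_natCast, Int.ringChoose_neg_natCast_succ, ← pow_sub_mul_pow (-1 : ℤ) hkn]
  linear_combination -(-1 : ℤ) ^ k * ((r + (n - k)).choose r : ℤ) * (m.choose k : ℤ) * hsq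

theorem alternating_binomial_identity_general (m n : ℕ) :
    ∑ k ∈ Finset.range (n + 1),
      (-1 : ℤ) ^ k * ((m + n - k).choose m : ℤ) * (m.choose k : ℤ) = 1 := by
  have hsub (k : ℕ) (hk : k ∈ range (n + 1)) : m + n - k = m + (n - k) := by
    have := mem_range.mp hk
    omega
  rw [sum_congr rfl fun k hk => by rw [hsub k hk], sum_range_neg_one_pow_mul_choose_mul_choose,
    sub_add_cancel_left, Int.ringChoose_neg_one, ← mul_pow, neg_one_mul, neg_neg, one_pow]

/-- For all natural numbers `m ≥ n`,
`∑_{k=0}^{n} (-1)^k * C(m+n-k, m) * C(m, k) = 1`. -/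
theorem alternating_binomial_identity (m n : ℕ) (h : n ≤ m) :
    ∑ k ∈ Finset.range (n + 1),
      (-1 : ℤ) ^ k * ((m + n - k).choose m : ℤ) * (m.choose k : ℤ) = 1 :=
  alternating_binomial_identity_general m n
end

section
/- The product ⋄ on Ш_N(A) is commutative: a ⋄ b = b ⋄ a for all a, b ∈ Ш_N(A). -/
open TensorProduct

variable (k A : Type*) [CommRing k] [CommRing A] [Algebra k A]

/-- The pure tensor `a₁ ⊗ ⋯ ⊗ aₘ`, realized inside the tensor algebra
`T(A) = ⊕_{n≥0} A^{⊗n}` as the product `ι a₁ * ⋯ * ι aₘ`. -/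
noncomputable def pureTensor (l : List A) : TensorAlgebra k A :=
  (l.map (TensorAlgebra.ι k)).prod

/-- The underlying module `Ш_N(A) = ⊕_{n≥1} A^{⊗n}` of the free commutative Nijenhuis
algebra on `A`: the span of the nonempty pure tensors inside the tensor algebra. -/
noncomputable def ShN : Submodule k (TensorAlgebra k A) :=
  Submodule.span k {x | ∃ l : List A, l ≠ [] ∧ x = pureTensor k A l}

/-- The right-shift operator `P_r(𝔞) = 1_A ⊗ 𝔞`. -/
noncomputable def Pr : TensorAlgebra k A →ₗ[k] TensorAlgebra k A :=
  LinearMap.mulLeft k (TensorAlgebra.ι k (1 : A))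

/-- The defining recursion of the product `⋄` of the free commutative Nijenhuis algebra
`Ш_N(A)`: for pure tensors `𝔞 = a₁ ⊗ 𝔞′ ∈ A^{⊗m}` and `𝔟 = b₁ ⊗ 𝔟′ ∈ A^{⊗n}`,
`𝔞 ⋄ 𝔟 = a₁b₁` if `m = n = 1`, `𝔞 ⋄ 𝔟 = a₁b₁ ⊗ 𝔟′` if `m = 1, n ≥ 2`,
`𝔞 ⋄ 𝔟 = a₁b₁ ⊗ 𝔞′` if `m ≥ 2, n = 1`, and
`𝔞 ⋄ 𝔟 = a₁b₁ ⊗ (𝔞′ ⋄ (1⊗𝔟′) + (1⊗𝔞′) ⋄ 𝔟′ - 1 ⊗ (𝔞′ ⋄ 𝔟′))` if `m, n ≥ 2`. -/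
def NijRec (d : TensorAlgebra k A →ₗ[k] TensorAlgebra k A →ₗ[k] TensorAlgebra k A) : Prop :=
  (∀ a b : A, d (TensorAlgebra.ι k a) (TensorAlgebra.ι k b) = TensorAlgebra.ι k (a * b)) ∧
  (∀ (a b : A) (m : List A), m ≠ [] →
    d (TensorAlgebra.ι k a) (TensorAlgebra.ι k b * pureTensor k A m) =
      TensorAlgebra.ι k (a * b) * pureTensor k A m) ∧
  (∀ (a b : A) (l : List A), l ≠ [] →
    d (TensorAlgebra.ι k a * pureTensor k A l) (TensorAlgebra.ι k b) =
      TensorAlgebra.ι k (a * b) * pureTensor k A l) ∧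
  (∀ (a b : A) (l m : List A), l ≠ [] → m ≠ [] →
    d (TensorAlgebra.ι k a * pureTensor k A l) (TensorAlgebra.ι k b * pureTensor k A m) =
      TensorAlgebra.ι k (a * b) *
        (d (pureTensor k A l) (Pr k A (pureTensor k A m)) +
         d (Pr k A (pureTensor k A l)) (pureTensor k A m) -
         Pr k A (d (pureTensor k A l) (pureTensor k A m))))

/-- The product `⋄` on `Ш_N(A)` is commutative. -/
theorem ShN_diamond_comm
    (d : TensorAlgebra k A →ₗ[k] TensorAlgebra k A →ₗ[k] TensorAlgebra k A)
    (hd : NijRec k A d) :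
    ∀ x ∈ ShN k A, ∀ y ∈ ShN k A, d x y = d y x := by
  obtain ⟨h1, h2, h3, h4⟩ := hd
  have hcons : ∀ (a : A) (l : List A),
      pureTensor k A (a :: l) = TensorAlgebra.ι k a * pureTensor k A l := by
    intro a l; simp [pureTensor]
  have hsingle : ∀ a : A, pureTensor k A [a] = TensorAlgebra.ι k a := by
    intro a; simp [pureTensor]
  have hPr : ∀ (l : List A),
      Pr k A (pureTensor k A l) = pureTensor k A ((1 : A) :: l) := by
    intro l; simp [Pr, hcons, LinearMap.mulLeft_apply]
  -- main lemma on pure tensors, by strong induction on total length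
  have key : ∀ n (l m : List A), l ≠ [] → m ≠ [] → l.length + m.length ≤ n →
      d (pureTensor k A l) (pureTensor k A m) =
        d (pureTensor k A m) (pureTensor k A l) := by
    intro n
    induction n with
    | zero => intro l m hl _ hlen; cases l with
        | nil => exact absurd rfl hl
        | cons a l' => simp at hlen
    | succ n ih =>
      rintro (_ | ⟨a, l'⟩) (_ | ⟨b, m'⟩) hl hm hlen
      · exact absurd rfl hl
      · exact absurd rfl hl
      · exact absurd rfl hm
      · cases l' with
        | nil =>
          cases m' with
          | nil => simp [hsingle, h1, mul_comm]
          | cons c m'' =>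
            rw [hsingle, hcons b, h2 a b _ (by simp), h3 b a _ (by simp),
              mul_comm a b]
        | cons c l'' =>
          cases m' with
          | nil =>
            rw [hsingle, hcons a, h3 a b _ (by simp), h2 b a _ (by simp),
              mul_comm a b]
          | cons e m'' =>
            rw [hcons a, hcons b, h4 a b _ _ (by simp) (by simp),
              h4 b a _ _ (by simp) (by simp), mul_comm a b]
            congr 1
            have hlm : d (pureTensor k A (c :: l'')) (pureTensor k A (e :: m'')) =
                d (pureTensor k A (e :: m'')) (pureTensor k A (c :: l'')) := by
              apply ih _ _ (by simp) (by simp)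
              simp only [List.length_cons] at hlen ⊢; omega
            have h1' : d (pureTensor k A (c :: l'')) (Pr k A (pureTensor k A (e :: m''))) =
                d (Pr k A (pureTensor k A (e :: m''))) (pureTensor k A (c :: l'')) := by
              rw [hPr]
              apply ih _ _ (by simp) (by simp)
              simp only [List.length_cons] at hlen ⊢; omega
            have h2' : d (Pr k A (pureTensor k A (c :: l''))) (pureTensor k A (e :: m'')) =
                d (pureTensor k A (e :: m'')) (Pr k A (pureTensor k A (c :: l''))) := by
              rw [hPr]
              apply ih _ _ (by simp) (by simp)
              simp only [List.length_cons] at hlen ⊢; omega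
            rw [hlm, h1', h2', add_comm]
  have key' : ∀ (l m : List A), l ≠ [] → m ≠ [] →
      d (pureTensor k A l) (pureTensor k A m) =
        d (pureTensor k A m) (pureTensor k A l) :=
    fun l m hl hm => key (l.length + m.length) l m hl hm le_rfl
  intro x hx y hy
  induction hx using Submodule.span_induction with
  | mem x hxs =>
    obtain ⟨l, hl, rfl⟩ := hxs
    induction hy using Submodule.span_induction with
    | mem y hys =>
      obtain ⟨m, hm, rfl⟩ := hys
      exact key' l m hl hm
    | zero => simp
    | add y z _ _ hy hz => simp [hy, hz]
    | smul c y _ hy => simp [hy]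
  | zero => simp
  | add x z _ _ hx' hz' => simp [hx', hz']
  | smul c x _ hx' => simp [hx']
end

section
/- The product ⋄ on Ш_N(A) is associative: (a ⋄ b) ⋄ c = a ⋄ (b ⋄ c) for all a, b, c ∈ Ш_N(A). -/
open TensorProduct

variable (k A : Type*) [CommRing k] [CommRing A] [Algebra k A]

section Aux

variable {k A : Type*} [CommRing k] [CommRing A] [Algebra k A]
lemma pt_cons (a : A) (l : List A) :
    pureTensor k A (a :: l) = TensorAlgebra.ι k a * pureTensor k A l := by
  simp [pureTensor]
lemma pt_nil : pureTensor k A ([] : List A) = 1 := by simp [pureTensor]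
lemma pt_single (a : A) : pureTensor k A [a] = TensorAlgebra.ι k a := by simp [pureTensor]
lemma pt_mem {l : List A} (hl : l ≠ []) : pureTensor k A l ∈ ShN k A :=
  Submodule.subset_span ⟨l, hl, rfl⟩
lemma Pr_apply (x : TensorAlgebra k A) : Pr k A x = TensorAlgebra.ι k (1 : A) * x := rfl
lemma Pr_pt (l : List A) : Pr k A (pureTensor k A l) = pureTensor k A ((1:A) :: l) := by
  rw [Pr_apply, pt_cons]
lemma mul_ι_mem (e : A) {t : TensorAlgebra k A} (ht : t ∈ ShN k A) :
    TensorAlgebra.ι k e * t ∈ ShN k A := by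
  refine Submodule.span_induction (p := fun t _ => TensorAlgebra.ι k e * t ∈ ShN k A)
    ?_ ?_ ?_ ?_ ht
  · rintro x ⟨l, hl, rfl⟩
    rw [← pt_cons]
    exact pt_mem (List.cons_ne_nil _ _)
  · simp
  · intro x y _ _ hx hy
    rw [mul_add]; exact Submodule.add_mem _ hx hy
  · intro r x _ hx
    rw [mul_smul_comm]; exact Submodule.smul_mem _ _ hx
lemma Pr_mem {t : TensorAlgebra k A} (ht : t ∈ ShN k A) : Pr k A t ∈ ShN k A := by
  rw [Pr_apply]; exact mul_ι_mem 1 ht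

section
variable {d : TensorAlgebra k A →ₗ[k] TensorAlgebra k A →ₗ[k] TensorAlgebra k A}
  (hd : NijRec k A d)
include hd

lemma d_pt_mem : ∀ (s : ℕ) (l m : List A), l ≠ [] → m ≠ [] →
    l.length + m.length ≤ s → d (pureTensor k A l) (pureTensor k A m) ∈ ShN k A := by
  intro s
  induction s with
  | zero => intro l m hl hm h; simp at h; cases l <;> simp_all
  | succ s ih =>
    rintro (_ | ⟨a, X⟩) (_ | ⟨b, Y⟩) hl hm hlen
    · exact absurd rfl hl
    · exact absurd rfl hl
    · exact absurd rfl hm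
    match X, Y with
    | [], [] =>
      rw [pt_single, pt_single, hd.1 a b, ← pt_single]
      exact pt_mem (by simp)
    | [], c :: Y' =>
      rw [pt_single, pt_cons b, hd.2.1 a b (c :: Y') (by simp)]
      exact mul_ι_mem _ (pt_mem (by simp))
    | c :: X', [] =>
      rw [pt_single, pt_cons a, hd.2.2.1 a b (c :: X') (by simp)]
      exact mul_ι_mem _ (pt_mem (by simp))
    | c :: X', e :: Y' =>
      rw [pt_cons a, pt_cons b]
      rw [hd.2.2.2 a b _ _ (by simp) (by simp)]
      refine mul_ι_mem _ (Submodule.sub_mem _ (Submodule.add_mem _ ?_ ?_) ?_)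
      · rw [Pr_pt]
        refine ih _ _ (by simp) (by simp) ?_
        simp at hlen ⊢; omega
      · rw [Pr_pt]
        refine ih _ _ (by simp) (by simp) ?_
        simp at hlen ⊢; omega
      · refine Pr_mem (ih _ _ (by simp) (by simp) ?_)
        simp at hlen ⊢; omega

lemma d_mem {x y : TensorAlgebra k A} (hx : x ∈ ShN k A) (hy : y ∈ ShN k A) :
    d x y ∈ ShN k A := by
  refine Submodule.span_induction (p := fun x _ => d x y ∈ ShN k A) ?_ ?_ ?_ ?_ hx
  · rintro x ⟨l, hl, rfl⟩
    refine Submodule.span_induction (p := fun y _ => d (pureTensor k A l) y ∈ ShN k A)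
      ?_ ?_ ?_ ?_ hy
    · rintro y ⟨m, hm, rfl⟩
      exact d_pt_mem hd (l.length + m.length) l m hl hm le_rfl
    · simp
    · intro u v _ _ hu hv; rw [map_add]; exact Submodule.add_mem _ hu hv
    · intro r u _ hu; rw [map_smul]; exact Submodule.smul_mem _ _ hu
  · simp
  · intro u v _ _ hu hv; rw [map_add, LinearMap.add_apply]; exact Submodule.add_mem _ hu hv
  · intro r u _ hu; rw [map_smul, LinearMap.smul_apply]; exact Submodule.smul_mem _ _ hu

lemma absorbL (a b : A) {t : TensorAlgebra k A} (ht : t ∈ ShN k A) :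
    d (TensorAlgebra.ι k a * t) (TensorAlgebra.ι k b) =
      TensorAlgebra.ι k (a * b) * t := by
  refine Submodule.span_induction (p := fun t _ => d (TensorAlgebra.ι k a * t)
    (TensorAlgebra.ι k b) = TensorAlgebra.ι k (a * b) * t) ?_ ?_ ?_ ?_ ht
  · rintro x ⟨l, hl, rfl⟩
    exact hd.2.2.1 a b l hl
  · simp
  · intro u v _ _ hu hv
    simp only [mul_add, map_add, LinearMap.add_apply, hu, hv]
  · intro r u _ hu
    simp only [mul_smul_comm, map_smul, LinearMap.smul_apply, hu]

lemma absorbR (a b : A) {t : TensorAlgebra k A} (ht : t ∈ ShN k A) :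
    d (TensorAlgebra.ι k a) (TensorAlgebra.ι k b * t) =
      TensorAlgebra.ι k (a * b) * t := by
  refine Submodule.span_induction (p := fun t _ => d (TensorAlgebra.ι k a)
    (TensorAlgebra.ι k b * t) = TensorAlgebra.ι k (a * b) * t) ?_ ?_ ?_ ?_ ht
  · rintro x ⟨l, hl, rfl⟩
    exact hd.2.1 a b l hl
  · simp
  · intro u v _ _ hu hv
    simp only [mul_add, map_add, hu, hv]
  · intro r u _ hu
    simp only [mul_smul_comm, map_smul, hu]

lemma absorbBL (a b : A) {m : List A} (hm : m ≠ []) {t : TensorAlgebra k A}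
    (ht : t ∈ ShN k A) :
    d (TensorAlgebra.ι k a * t) (TensorAlgebra.ι k b * pureTensor k A m) =
      TensorAlgebra.ι k (a * b) *
        (d t (Pr k A (pureTensor k A m)) + d (Pr k A t) (pureTensor k A m) -
          Pr k A (d t (pureTensor k A m))) := by
  refine Submodule.span_induction (p := fun t _ => d (TensorAlgebra.ι k a * t)
    (TensorAlgebra.ι k b * pureTensor k A m) = TensorAlgebra.ι k (a * b) *
      (d t (Pr k A (pureTensor k A m)) + d (Pr k A t) (pureTensor k A m) -
        Pr k A (d t (pureTensor k A m)))) ?_ ?_ ?_ ?_ ht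
  · rintro x ⟨l, hl, rfl⟩
    exact hd.2.2.2 a b l m hl hm
  · simp
  · intro u v _ _ hu hv
    simp only [mul_add, map_add, LinearMap.add_apply, hu, hv, mul_sub]
    abel
  · intro r u _ hu
    simp only [mul_smul_comm, map_smul, LinearMap.smul_apply, hu]
    rw [← smul_add, ← smul_sub, mul_smul_comm]

lemma absorbBR (a b : A) {l : List A} (hl : l ≠ []) {t : TensorAlgebra k A}
    (ht : t ∈ ShN k A) :
    d (TensorAlgebra.ι k a * pureTensor k A l) (TensorAlgebra.ι k b * t) =
      TensorAlgebra.ι k (a * b) *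
        (d (pureTensor k A l) (Pr k A t) + d (Pr k A (pureTensor k A l)) t -
          Pr k A (d (pureTensor k A l) t)) := by
  refine Submodule.span_induction (p := fun t _ => d (TensorAlgebra.ι k a * pureTensor k A l)
    (TensorAlgebra.ι k b * t) = TensorAlgebra.ι k (a * b) *
      (d (pureTensor k A l) (Pr k A t) + d (Pr k A (pureTensor k A l)) t -
        Pr k A (d (pureTensor k A l) t))) ?_ ?_ ?_ ?_ ht
  · rintro x ⟨m, hm, rfl⟩
    exact hd.2.2.2 a b l m hl hm
  · simp
  · intro u v _ _ hu hv
    simp only [mul_add, map_add, LinearMap.add_apply, hu, hv, mul_sub]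
    abel
  · intro r u _ hu
    simp only [mul_smul_comm, map_smul, LinearMap.smul_apply, hu]
    rw [← smul_add, ← smul_sub, mul_smul_comm]

lemma nij : ∀ {x : TensorAlgebra k A}, x ∈ ShN k A → ∀ {y : TensorAlgebra k A}, y ∈ ShN k A →
    d (Pr k A x) (Pr k A y) =
      Pr k A (d x (Pr k A y) + d (Pr k A x) y - Pr k A (d x y)) := by
  intro x hx y hy
  refine Submodule.span_induction (p := fun x _ => ∀ {y : TensorAlgebra k A}, y ∈ ShN k A →
    d (Pr k A x) (Pr k A y) =
      Pr k A (d x (Pr k A y) + d (Pr k A x) y - Pr k A (d x y))) ?_ ?_ ?_ ?_ hx hy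
  · rintro x ⟨l, hl, rfl⟩ y hy
    refine Submodule.span_induction (p := fun y _ =>
      d (Pr k A (pureTensor k A l)) (Pr k A y) =
        Pr k A (d (pureTensor k A l) (Pr k A y) + d (Pr k A (pureTensor k A l)) y -
          Pr k A (d (pureTensor k A l) y))) ?_ ?_ ?_ ?_ hy
    · rintro y ⟨m, hm, rfl⟩
      conv_lhs => rw [Pr_pt l, Pr_pt m, pt_cons, pt_cons]
      rw [hd.2.2.2 1 1 l m hl hm, one_mul, ← Pr_apply]
    · simp
    · intro u v _ _ hu hv
      simp only [map_add, LinearMap.add_apply, hu, hv]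
      abel_nf
      simp only [map_add]
      abel
    · intro r u _ hu
      simp only [map_smul, LinearMap.smul_apply, hu]
      rw [← smul_add, ← smul_sub, map_smul]
  · intro y hy; simp
  · intro u v _ _ hu hv y hy
    simp only [map_add, LinearMap.add_apply, hu hy, hv hy]
    abel_nf
    simp only [map_add]
    abel
  · intro r u _ hu y hy
    simp only [map_smul, LinearMap.smul_apply, hu hy]
    rw [← smul_add, ← smul_sub, map_smul]

end

section
variable {d : TensorAlgebra k A →ₗ[k] TensorAlgebra k A →ₗ[k] TensorAlgebra k A}
  (hd : NijRec k A d)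
include hd

lemma assocAux : ∀ (s : ℕ) (l m n : List A), l ≠ [] → m ≠ [] → n ≠ [] →
    l.length + m.length + n.length ≤ s →
    d (d (pureTensor k A l) (pureTensor k A m)) (pureTensor k A n) =
      d (pureTensor k A l) (d (pureTensor k A m) (pureTensor k A n)) := by
  intro s
  induction s with
  | zero =>
    intro l m n hl hm hn hlen
    cases l <;> simp_all
  | succ s ih =>
    rintro (_ | ⟨a, X⟩) (_ | ⟨b, Y⟩) (_ | ⟨c, Z⟩) hl hm hn hlen <;>
      try (exact absurd rfl (by assumption))
    simp only [List.length_cons] at hlen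
    rcases eq_or_ne X [] with rfl | hX
    · rcases eq_or_ne Y [] with rfl | hY
      · rcases eq_or_ne Z [] with rfl | hZ
        · -- all singletons
          rw [pt_single, pt_single, pt_single, hd.1 a b, hd.1 (a*b) c, hd.1 b c,
            hd.1 a (b*c), mul_assoc]
        · -- Z nonempty
          rw [pt_single, pt_single, pt_cons c, hd.1 a b, hd.2.1 (a*b) c Z hZ,
            hd.2.1 b c Z hZ, hd.2.1 a (b*c) Z hZ, mul_assoc]  -- last: d (ι a) (ι(b*c) * PT Z)
      · rcases eq_or_ne Z [] with rfl | hZ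
        · rw [pt_single, pt_cons b, pt_single, hd.2.1 a b Y hY, hd.2.2.1 (a*b) c Y hY,
            hd.2.2.1 b c Y hY, hd.2.1 a (b*c) Y hY, mul_assoc]
        · -- Y, Z nonempty; X empty
          rw [pt_single, pt_cons b, pt_cons c, hd.2.1 a b Y hY,
            hd.2.2.2 (a*b) c Y Z hY hZ, hd.2.2.2 b c Y Z hY hZ,
            absorbR hd a (b*c) (Submodule.sub_mem _ (Submodule.add_mem _
              (d_mem hd (pt_mem hY) (Pr_mem (pt_mem hZ)))
              (d_mem hd (Pr_mem (pt_mem hY)) (pt_mem hZ)))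
              (Pr_mem (d_mem hd (pt_mem hY) (pt_mem hZ)))), mul_assoc]
    · rcases eq_or_ne Y [] with rfl | hY
      · rcases eq_or_ne Z [] with rfl | hZ
        · rw [pt_cons a, pt_single b, pt_single c, hd.2.2.1 a b X hX,
            hd.2.2.1 (a*b) c X hX, hd.1 b c, hd.2.2.1 a (b*c) X hX, mul_assoc]
        · -- X, Z nonempty; Y empty
          rw [pt_cons a, pt_single b, pt_cons c, hd.2.2.1 a b X hX,
            hd.2.2.2 (a*b) c X Z hX hZ, hd.2.1 b c Z hZ,
            hd.2.2.2 a (b*c) X Z hX hZ, mul_assoc]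
      · rcases eq_or_ne Z [] with rfl | hZ
        · -- X, Y nonempty; Z empty
          rw [pt_cons a, pt_cons b, pt_single c, hd.2.2.2 a b X Y hX hY,
            absorbL hd (a*b) c (Submodule.sub_mem _ (Submodule.add_mem _
              (d_mem hd (pt_mem hX) (Pr_mem (pt_mem hY)))
              (d_mem hd (Pr_mem (pt_mem hX)) (pt_mem hY)))
              (Pr_mem (d_mem hd (pt_mem hX) (pt_mem hY)))),
            hd.2.2.1 b c Y hY, hd.2.2.2 a (b*c) X Y hX hY, mul_assoc]
        · -- hard case: X, Y, Z all nonempty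
          have hxy := d_mem hd (pt_mem hX) (pt_mem hY)
          have hyz := d_mem hd (pt_mem hY) (pt_mem hZ)
          have hT : (d (pureTensor k A X) (Pr k A (pureTensor k A Y)) +
              d (Pr k A (pureTensor k A X)) (pureTensor k A Y) -
              Pr k A (d (pureTensor k A X) (pureTensor k A Y))) ∈ ShN k A :=
            Submodule.sub_mem _ (Submodule.add_mem _
              (d_mem hd (pt_mem hX) (Pr_mem (pt_mem hY)))
              (d_mem hd (Pr_mem (pt_mem hX)) (pt_mem hY))) (Pr_mem hxy)
          have hS : (d (pureTensor k A Y) (Pr k A (pureTensor k A Z)) +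
              d (Pr k A (pureTensor k A Y)) (pureTensor k A Z) -
              Pr k A (d (pureTensor k A Y) (pureTensor k A Z))) ∈ ShN k A :=
            Submodule.sub_mem _ (Submodule.add_mem _
              (d_mem hd (pt_mem hY) (Pr_mem (pt_mem hZ)))
              (d_mem hd (Pr_mem (pt_mem hY)) (pt_mem hZ))) (Pr_mem hyz)
          rw [pt_cons a, pt_cons b, pt_cons c, hd.2.2.2 a b X Y hX hY,
            hd.2.2.2 b c Y Z hY hZ, absorbBL hd (a*b) c hZ hT,
            absorbBR hd a (b*c) hX hS, mul_assoc]
          congr 1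
          have nxy := nij hd (pt_mem hX) (pt_mem hY)
          have nyz := nij hd (pt_mem hY) (pt_mem hZ)
          have nxyz1 := nij hd hxy (pt_mem hZ)
          have nxyz2 := nij hd (pt_mem hX) hyz
          have A1 := ih X Y Z hX hY hZ (by omega)
          have A2 : d (d (pureTensor k A X) (pureTensor k A Y)) (Pr k A (pureTensor k A Z)) =
              d (pureTensor k A X) (d (pureTensor k A Y) (Pr k A (pureTensor k A Z))) := by
            rw [Pr_pt]
            exact ih X Y ((1:A) :: Z) hX hY (by simp) (by simp; omega)
          have A3 : d (d (pureTensor k A X) (Pr k A (pureTensor k A Y))) (pureTensor k A Z) =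
              d (pureTensor k A X) (d (Pr k A (pureTensor k A Y)) (pureTensor k A Z)) := by
            rw [Pr_pt]
            exact ih X ((1:A) :: Y) Z hX (by simp) hZ (by simp; omega)
          have A4 : d (d (Pr k A (pureTensor k A X)) (pureTensor k A Y)) (pureTensor k A Z) =
              d (Pr k A (pureTensor k A X)) (d (pureTensor k A Y) (pureTensor k A Z)) := by
            rw [Pr_pt]
            exact ih ((1:A) :: X) Y Z (by simp) hY hZ (by simp; omega)
          have A5 : d (d (pureTensor k A X) (Pr k A (pureTensor k A Y)))
              (Pr k A (pureTensor k A Z)) =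
              d (pureTensor k A X) (d (Pr k A (pureTensor k A Y))
                (Pr k A (pureTensor k A Z))) := by
            rw [Pr_pt, Pr_pt]
            exact ih X ((1:A) :: Y) ((1:A) :: Z) hX (by simp) (by simp) (by simp; omega)
          have A6 : d (d (Pr k A (pureTensor k A X)) (pureTensor k A Y))
              (Pr k A (pureTensor k A Z)) =
              d (Pr k A (pureTensor k A X)) (d (pureTensor k A Y)
                (Pr k A (pureTensor k A Z))) := by
            rw [Pr_pt, Pr_pt]
            exact ih ((1:A) :: X) Y ((1:A) :: Z) (by simp) hY (by simp) (by simp; omega)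
          have A7 : d (d (Pr k A (pureTensor k A X)) (Pr k A (pureTensor k A Y)))
              (pureTensor k A Z) =
              d (Pr k A (pureTensor k A X)) (d (Pr k A (pureTensor k A Y))
                (pureTensor k A Z)) := by
            rw [Pr_pt, Pr_pt]
            exact ih ((1:A) :: X) ((1:A) :: Y) Z (by simp) (by simp) hZ (by simp; omega)
          rw [← nxy, ← nyz]
          simp only [map_add, map_sub, LinearMap.add_apply, LinearMap.sub_apply]
          rw [nxyz1, nxyz2]
          simp only [map_add, map_sub]
          rw [A1, A2, A3, A4, A5, A6, A7]
          abel

end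

theorem ShN_diamond_assoc'
    (d : TensorAlgebra k A →ₗ[k] TensorAlgebra k A →ₗ[k] TensorAlgebra k A)
    (hd : NijRec k A d) :
    ∀ x ∈ ShN k A, ∀ y ∈ ShN k A, ∀ z ∈ ShN k A, d (d x y) z = d x (d y z) := by
  intro x hx y hy z hz
  refine Submodule.span_induction (p := fun x _ => ∀ y ∈ ShN k A, ∀ z ∈ ShN k A,
    d (d x y) z = d x (d y z)) ?_ ?_ ?_ ?_ hx y hy z hz
  · rintro x ⟨l, hl, rfl⟩ y hy z hz
    refine Submodule.span_induction (p := fun y _ => ∀ z ∈ ShN k A,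
      d (d (pureTensor k A l) y) z = d (pureTensor k A l) (d y z)) ?_ ?_ ?_ ?_ hy z hz
    · rintro y ⟨m, hm, rfl⟩ z hz
      refine Submodule.span_induction (p := fun z _ =>
        d (d (pureTensor k A l) (pureTensor k A m)) z =
          d (pureTensor k A l) (d (pureTensor k A m) z)) ?_ ?_ ?_ ?_ hz
      · rintro z ⟨n, hn, rfl⟩
        exact assocAux hd (l.length + m.length + n.length) l m n hl hm hn le_rfl
      · simp
      · intro u v _ _ hu hv
        simp only [map_add, hu, hv]
      · intro r u _ hu
        simp only [map_smul, hu]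
    · intro z hz; simp
    · intro u v _ _ hu hv z hz
      simp only [map_add, LinearMap.add_apply, hu z hz, hv z hz]
    · intro r u _ hu z hz
      simp only [map_smul, LinearMap.smul_apply, hu z hz]
  · intro y hy z hz; simp
  · intro u v _ _ hu hv y hy z hz
    simp only [map_add, LinearMap.add_apply, hu y hy z hz, hv y hy z hz]
  · intro r u _ hu y hy z hz
    simp only [map_smul, LinearMap.smul_apply, hu y hy z hz]

end Aux

/-- The product `⋄` on `Ш_N(A)` is associative. -/
theorem ShN_diamond_assoc
    (d : TensorAlgebra k A →ₗ[k] TensorAlgebra k A →ₗ[k] TensorAlgebra k A)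
    (hd : NijRec k A d) :
    ∀ x ∈ ShN k A, ∀ y ∈ ShN k A, ∀ z ∈ ShN k A, d (d x y) z = d x (d y z) := by
  intro x hx y hy z hz
  exact ShN_diamond_assoc' d hd x hx y hy z hz
end

section
/- Let k be a field. Any connected graded left counital k-bialgebra H is a left counital right antipode Hopf algebra: there exists a k-linear map S : H → H with id_H ∗ S = μ∘ε, given recursively by S(1) = 1 and S(x) = −∑_{(x)} x′ S(x″) for x ∈ ker(ε), where Δ̃(x) = ∑_{(x)} x′⊗x″. -/
open TensorProduct

variable (k H : Type*) [Field k] [Ring H] [Algebra k H]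

/-- The image `U ⊗ V` of two submodules inside `M ⊗ M`. -/
noncomputable def tpSub {M : Type*} [AddCommGroup M] [Module k M]
    (U V : Submodule k M) : Submodule k (M ⊗[k] M) :=
  LinearMap.range (TensorProduct.map U.subtype V.subtype)

/-- `H` is a connected graded left counital `k`-bialgebra: a `k`-algebra with an internal
grading `ℋ` with `ℋ⁽ᵖ⁾ℋ⁽ᑫ⁾ ⊆ ℋ⁽ᵖ⁺ᑫ⁾`, `ℋ⁽⁰⁾ = im μ = k`, with an algebra-homomorphism
coproduct `Δ` which is coassociative and graded in the sense
`Δ(ℋ⁽ⁿ⁾) ⊆ (ℋ⁽⁰⁾ ⊗ ℋ⁽ⁿ⁾) ⊕ (⊕_{p+q=n, p,q>0} ℋ⁽ᵖ⁾ ⊗ ℋ⁽ᑫ⁾)`, and an algebra-homomorphism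
counit `ε` satisfying the left counicity `(ε ⊗ id)Δ = β_ℓ` and `ker ε = ⊕_{n≥1} ℋ⁽ⁿ⁾`. -/
structure IsConnGradedLeftCounitalBialgebra (ℋ : ℕ → Submodule k H)
    (Δ : H →ₐ[k] H ⊗[k] H) (ε : H →ₐ[k] k) : Prop where
  internal : DirectSum.IsInternal ℋ
  mul_mem : ∀ (p q : ℕ) (x y : H), x ∈ ℋ p → y ∈ ℋ q → x * y ∈ ℋ (p + q)
  coassoc : ∀ x : H, (TensorProduct.assoc k H H H)
      (TensorProduct.map Δ.toLinearMap LinearMap.id (Δ x)) =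
      TensorProduct.map LinearMap.id Δ.toLinearMap (Δ x)
  left_counit : ∀ x : H, TensorProduct.map ε.toLinearMap LinearMap.id (Δ x) = (1 : k) ⊗ₜ[k] x
  graded_coproduct : ∀ n : ℕ, ∀ x ∈ ℋ n, Δ x ∈
      tpSub k (ℋ 0) (ℋ n) ⊔
        ⨆ (p : ℕ) (q : ℕ) (_ : p + q = n) (_ : 0 < p) (_ : 0 < q), tpSub k (ℋ p) (ℋ q)
  connected : ℋ 0 = LinearMap.range (Algebra.linearMap k H)
  ker_counit : LinearMap.ker ε.toLinearMap = ⨆ (n : ℕ) (_ : 0 < n), ℋ n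

/-!
Write `Δ x = 1 ⊗ x + Δ̃ x`; left counicity identifies the `ℋ⁽⁰⁾ ⊗ ℋ⁽ⁿ⁾` part of `Δ x` as
`1 ⊗ x`, so `Δ̃ x ∈ ⊕_{p+q=n, p,q>0} ℋ⁽ᵖ⁾ ⊗ ℋ⁽ᑫ⁾`. For `x ∈ ℋ⁽ⁿ⁾`, `n > 0`, the equation
`(id ∗ S) x = ε x = 0` therefore reads `S x = -∑ x′ S(x″)` and only involves `S` in degrees
`< n`, so `S` can be built degree by degree. Concretely, the truncations `Fₙ`, equal to `S` up
to degree `n` and zero above it, satisfy `Fₙ₊₁ = Fₙ - (id ∗ Fₙ) ∘ πₙ₊₁`.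
-/

open DirectSum

section

variable {k H}

theorem tpSub_le_iff {M : Type*} [AddCommGroup M] [Module k M]
    {U V : Submodule k M} {P : Submodule k (M ⊗[k] M)} :
    tpSub k U V ≤ P ↔ ∀ a ∈ U, ∀ b ∈ V, a ⊗ₜ[k] b ∈ P := by
  rw [tpSub, ← mapIncl, range_mapIncl, Submodule.map₂_le]
  rfl

section GradedLinearMaps

variable {R M N ι : Type*} [CommSemiring R] [AddCommMonoid M] [Module R M]
  [AddCommMonoid N] [Module R N] [DecidableEq ι] (ℳ : ι → Submodule R M) [Decomposition ℳ]

noncomputable def gradedProj (i : ι) : M →ₗ[R] M :=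
  (ℳ i).subtype ∘ₗ component R ι (ℳ ·) i ∘ₗ (decomposeLinearEquiv ℳ).toLinearMap

theorem gradedProj_of_mem {i : ι} {x : M} (hx : x ∈ ℳ i) : gradedProj ℳ i x = x :=
  decompose_of_mem_same ℳ hx

theorem gradedProj_of_mem_ne {i j : ι} {x : M} (hx : x ∈ ℳ i) (hij : i ≠ j) :
    gradedProj ℳ j x = 0 :=
  decompose_of_mem_ne ℳ hx hij

noncomputable def gradedPiecewise (f : ι → M →ₗ[R] N) : M →ₗ[R] N :=
  toModule R ι N (fun i => f i ∘ₗ (ℳ i).subtype) ∘ₗ (decomposeLinearEquiv ℳ).toLinearMap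

theorem gradedPiecewise_of_mem (f : ι → M →ₗ[R] N) {i : ι} {x : M} (hx : x ∈ ℳ i) :
    gradedPiecewise ℳ f x = f i x := by
  lift x to ℳ i using hx
  simp [gradedPiecewise]

end GradedLinearMaps

section TruncatedAntipode

variable {R A : Type*} [CommRing R] [Ring A] [Algebra R A]

noncomputable def idConv (Δ : A →ₗ[R] A ⊗[R] A) (f : A →ₗ[R] A) : A →ₗ[R] A :=
  LinearMap.mul' R A ∘ₗ map LinearMap.id f ∘ₗ Δ

variable (𝒜 : ℕ → Submodule R A) [Decomposition 𝒜] (Δ : A →ₗ[R] A ⊗[R] A)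

noncomputable def truncAntipode : ℕ → A →ₗ[R] A
  | 0 => gradedProj 𝒜 0
  | n + 1 => truncAntipode n - idConv Δ (truncAntipode n) ∘ₗ gradedProj 𝒜 (n + 1)

variable {𝒜}

theorem truncAntipode_of_mem_of_lt {q : ℕ} {x : A} (hx : x ∈ 𝒜 q) :
    ∀ {m}, m < q → truncAntipode 𝒜 Δ m x = 0
  | 0, h => gradedProj_of_mem_ne 𝒜 hx h.ne'
  | m + 1, h => by
    simp [truncAntipode, truncAntipode_of_mem_of_lt hx (m.lt_succ_self.trans h),
      gradedProj_of_mem_ne 𝒜 hx h.ne']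

theorem truncAntipode_of_mem_of_le {q : ℕ} {x : A} (hx : x ∈ 𝒜 q) :
    ∀ {m}, q ≤ m → truncAntipode 𝒜 Δ m x = truncAntipode 𝒜 Δ q x
  | 0, h => by rw [Nat.le_zero.mp h]
  | m + 1, h => by
    rcases h.eq_or_lt with rfl | h
    · rfl
    · simp [truncAntipode, truncAntipode_of_mem_of_le hx (Nat.le_of_lt_succ h),
        gradedProj_of_mem_ne 𝒜 hx h.ne]

theorem truncAntipode_succ_of_mem {m : ℕ} {x : A} (hx : x ∈ 𝒜 (m + 1)) :
    truncAntipode 𝒜 Δ (m + 1) x = -idConv Δ (truncAntipode 𝒜 Δ m) x := by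
  simp [truncAntipode, gradedProj_of_mem 𝒜 hx,
    truncAntipode_of_mem_of_lt Δ hx m.lt_succ_self]

variable (𝒜)

noncomputable def antipode : A →ₗ[R] A :=
  gradedPiecewise 𝒜 (truncAntipode 𝒜 Δ)

variable {𝒜}

theorem antipode_of_mem {q m : ℕ} {x : A} (hx : x ∈ 𝒜 q) (h : q ≤ m) :
    antipode 𝒜 Δ x = truncAntipode 𝒜 Δ m x := by
  rw [antipode, gradedPiecewise_of_mem 𝒜 _ hx, truncAntipode_of_mem_of_le Δ hx h]

end TruncatedAntipode

noncomputable def positiveBidegree {M : Type*} [AddCommGroup M] [Module k M]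
    (ℋ : ℕ → Submodule k M) (n : ℕ) : Submodule k (M ⊗[k] M) :=
  ⨆ (p : ℕ) (q : ℕ) (_ : p + q = n) (_ : 0 < p) (_ : 0 < q), tpSub k (ℋ p) (ℋ q)

theorem positiveBidegree_le {M : Type*} [AddCommGroup M] [Module k M]
    {ℋ : ℕ → Submodule k M} {n : ℕ} {P : Submodule k (M ⊗[k] M)}
    (h : ∀ p q, p + q = n → 0 < p → 0 < q → ∀ a ∈ ℋ p, ∀ b ∈ ℋ q, a ⊗ₜ[k] b ∈ P) :
    positiveBidegree ℋ n ≤ P :=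
  iSup_le fun p => iSup_le fun q => iSup_le fun hpq => iSup_le fun hp => iSup_le fun hq =>
    tpSub_le_iff.2 (h p q hpq hp hq)

theorem idConv_algebraMap (Δ : H →ₐ[k] H ⊗[k] H) (f : H →ₗ[k] H) (c : k) :
    idConv Δ.toLinearMap f (algebraMap k H c) = c • f 1 := by
  simp [idConv, Algebra.algebraMap_eq_smul_one, Algebra.TensorProduct.one_def]

namespace IsConnGradedLeftCounitalBialgebra

variable {ℋ : ℕ → Submodule k H} {Δ : H →ₐ[k] H ⊗[k] H} {ε : H →ₐ[k] k}
  (hH : IsConnGradedLeftCounitalBialgebra k H ℋ Δ ε)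
include hH

theorem one_mem : (1 : H) ∈ ℋ 0 :=
  hH.connected ▸ ⟨1, map_one (algebraMap k H)⟩

theorem counit_eq_zero {p : ℕ} (hp : 0 < p) {x : H} (hx : x ∈ ℋ p) : ε x = 0 :=
  (hH.ker_counit.ge (le_biSup ℋ hp hx) : _)

theorem tpSub_zero_le (V : Submodule k H) :
    tpSub k (ℋ 0) V ≤ V.map (TensorProduct.mk k H H 1) := by
  refine tpSub_le_iff.2 fun a ha b hb => ?_
  obtain ⟨c, rfl⟩ : a ∈ LinearMap.range (Algebra.linearMap k H) := hH.connected ▸ ha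
  exact ⟨c • b, V.smul_mem c hb, by simp [Algebra.algebraMap_eq_smul_one, smul_tmul]⟩

theorem exists_coproduct_eq {n : ℕ} {x : H} (hx : x ∈ ℋ n) :
    ∃ z ∈ positiveBidegree ℋ n, Δ x = 1 ⊗ₜ x + z := by
  obtain ⟨y, hy, z, hz, hyz⟩ := Submodule.mem_sup.mp (hH.graded_coproduct n x hx)
  obtain ⟨y₀, -, rfl⟩ := hH.tpSub_zero_le _ hy
  have hεz : map ε.toLinearMap LinearMap.id z = 0 :=
    positiveBidegree_le (P := LinearMap.ker _)
      (fun p _ _ hp _ a ha b _ => by simp [hH.counit_eq_zero hp ha]) hz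
  have hy₀ : y₀ = x := by
    simpa [← hyz, hεz] using congrArg (TensorProduct.lid k H) (hH.left_counit x)
  exact ⟨z, hz, by rw [← hyz, ← hy₀]; rfl⟩

variable [Decomposition ℋ]

theorem antipode_one : antipode ℋ Δ.toLinearMap 1 = 1 := by
  rw [antipode_of_mem _ hH.one_mem le_rfl]
  exact gradedProj_of_mem ℋ hH.one_mem

theorem idConv_antipode_of_mem_zero {x : H} (hx : x ∈ ℋ 0) :
    idConv Δ.toLinearMap (antipode ℋ Δ.toLinearMap) x = algebraMap k H (ε x) := by
  obtain ⟨c, rfl⟩ : x ∈ LinearMap.range (Algebra.linearMap k H) := hH.connected ▸ hx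
  rw [Algebra.linearMap_apply, idConv_algebraMap, hH.antipode_one, AlgHom.commutes,
    Algebra.algebraMap_self_apply, Algebra.algebraMap_eq_smul_one]

theorem idConv_antipode_of_mem_succ {m : ℕ} {x : H} (hx : x ∈ ℋ (m + 1)) :
    idConv Δ.toLinearMap (antipode ℋ Δ.toLinearMap) x = 0 := by
  set S := antipode ℋ Δ.toLinearMap
  set F := truncAntipode ℋ Δ.toLinearMap m
  obtain ⟨z, hz, hΔx⟩ := hH.exists_coproduct_eq hx
  have hSz : map LinearMap.id S z = map LinearMap.id F z :=
    positiveBidegree_le (P := LinearMap.eqLocus _ _)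
      (fun p q hpq hp _ a _ b hb => by simp [S, F, antipode_of_mem _ hb (by omega : q ≤ m)]) hz
  have hSx : S x = -idConv Δ.toLinearMap F x := by
    rw [antipode_of_mem _ hx le_rfl, truncAntipode_succ_of_mem _ hx]
  simp [idConv, hΔx, hSz, hSx, F, truncAntipode_of_mem_of_lt _ hx m.lt_succ_self]

end IsConnGradedLeftCounitalBialgebra

end

/-- A connected graded left counital bialgebra over a field `k` is a left counital right
antipode Hopf algebra: there is a `k`-linear map `S : H → H` with `S(1) = 1` and
`id_H ∗ S = μ ∘ ε`, i.e. `m ∘ (id ⊗ S) ∘ Δ = μ ∘ ε`. -/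
theorem connGraded_right_antipode (ℋ : ℕ → Submodule k H)
    (Δ : H →ₐ[k] H ⊗[k] H) (ε : H →ₐ[k] k)
    (hH : IsConnGradedLeftCounitalBialgebra k H ℋ Δ ε) :
    ∃ S : H →ₗ[k] H, S 1 = 1 ∧
      ∀ x : H, (LinearMap.mul' k H) (TensorProduct.map LinearMap.id S (Δ x)) =
        algebraMap k H (ε x) := by
  let _ : Decomposition ℋ := hH.internal.chooseDecomposition
  have hS : idConv Δ.toLinearMap (antipode ℋ Δ.toLinearMap) =
      Algebra.linearMap k H ∘ₗ ε.toLinearMap := by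
    refine decompose_lhom_ext ℋ fun n => LinearMap.ext fun ⟨x, hx⟩ => ?_
    cases n with
    | zero => exact hH.idConv_antipode_of_mem_zero hx
    | succ m => simp [hH.idConv_antipode_of_mem_succ hx, hH.counit_eq_zero m.succ_pos hx]
  exact ⟨antipode ℋ Δ.toLinearMap, hH.antipode_one, LinearMap.congr_fun hS⟩
end
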